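/- arXiv:1802.02738 — 4 statements merged into one kernel-verified Lean document; each statement's English description precedes it below -/
import Mathlib

section
/- Let f, g : ℂ → ℂ be transcendental entire functions, let ϑ : ℂ → ℂ be a homeomorphism of the plane, and let U ⊆ ℂ be a set such that ϑ(f(z)) = g(ϑ(z)) for all z ∈ U. If I(f) ⊆ U and I(g) ⊆ ϑ(U), then ϑ(I(f)) = I(g). -/
/-- A function `f : ℂ → ℂ` is transcendental entire if it is holomorphic on all of `ℂ`
and is not a polynomial. -/
def TranscendentalEntire (f : ℂ → ℂ) : Prop :=
  Differentiable ℂ f ∧ ¬ ∃ p : Polynomial ℂ, ∀ z, f z = p.eval z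

/-- The escaping set `I(f) = { z : |f^n(z)| → ∞ }`. -/
def escapingSet (f : ℂ → ℂ) : Set ℂ :=
  {z | Filter.Tendsto (fun n : ℕ => ‖f^[n] z‖) Filter.atTop Filter.atTop}

/-! Escaping sets are forward invariant, so an `f`-orbit in `I(f)` stays in `U` and a `g`-orbit
in `I(g)` stays in `ϑ(U)`; by injectivity of `ϑ` and induction, the latter is the image of an
`f`-orbit in `U`. Along an orbit in `U` the relation `ϑ ∘ f = g ∘ ϑ` iterates, and a homeomorphism
of `ℂ` maps sequences tending to `∞` exactly to sequences tending to `∞`. -/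

open Filter Function

section Semiconj

variable {α β : Type*} {f : α → α} {g : β → β} {ϑ : α → β} {U : Set α}

theorem apply_iterate_eq_iterate_apply (hconj : ∀ z ∈ U, ϑ (f z) = g (ϑ z)) {z : α} {n : ℕ}
    (hz : ∀ k < n, f^[k] z ∈ U) : ϑ (f^[n] z) = g^[n] (ϑ z) := by
  induction n with
  | zero => rfl
  | succ n ih =>
    rw [iterate_succ_apply', iterate_succ_apply', hconj _ (hz n n.lt_succ_self),
      ih fun k hk => hz k (hk.trans n.lt_succ_self)]

theorem iterate_mem_of_iterate_apply_mem_image (hϑ : Injective ϑ)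
    (hconj : ∀ z ∈ U, ϑ (f z) = g (ϑ z)) {z : α} (hz : ∀ n, g^[n] (ϑ z) ∈ ϑ '' U) (n : ℕ) :
    f^[n] z ∈ U := by
  induction n using Nat.strong_induction_on with
  | _ n ih => rw [← hϑ.mem_set_image, apply_iterate_eq_iterate_apply hconj ih]; exact hz n

end Semiconj

theorem Homeomorph.tendsto_norm_comp_atTop_iff {E F : Type*} [NormedAddCommGroup E]
    [NormedAddCommGroup F] [ProperSpace E] [ProperSpace F] (ϑ : E ≃ₜ F) {ι : Type*}
    {l : Filter ι} {a : ι → E} :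
    Tendsto (fun i => ‖ϑ (a i)‖) l atTop ↔ Tendsto (fun i => ‖a i‖) l atTop := by
  simp only [tendsto_norm_atTop_iff_cobounded, Metric.cobounded_eq_cocompact,
    ← ϑ.comap_cocompact, tendsto_comap_iff]
  rfl

theorem iterate_mem_escapingSet {f : ℂ → ℂ} {z : ℂ} (hz : z ∈ escapingSet f) (k : ℕ) :
    f^[k] z ∈ escapingSet f := by
  simpa only [escapingSet, Set.mem_ofPred_eq, comp_def, ← iterate_add_apply]
    using hz.comp (tendsto_add_atTop_nat k)

theorem apply_mem_escapingSet_iff {f g : ℂ → ℂ} (ϑ : ℂ ≃ₜ ℂ) {U : Set ℂ}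
    (hconj : ∀ z ∈ U, ϑ (f z) = g (ϑ z)) {z : ℂ} (hz : ∀ n, f^[n] z ∈ U) :
    ϑ z ∈ escapingSet g ↔ z ∈ escapingSet f := by
  simp only [escapingSet, Set.mem_ofPred_eq,
    ← fun n => apply_iterate_eq_iterate_apply hconj fun k (_ : k < n) => hz k]
  exact ϑ.tendsto_norm_comp_atTop_iff

theorem image_escapingSet_eq_of_conj_general
    (f g : ℂ → ℂ)
    (ϑ : ℂ ≃ₜ ℂ) (U : Set ℂ)
    (hconj : ∀ z ∈ U, ϑ (f z) = g (ϑ z))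
    (hIf : escapingSet f ⊆ U) (hIg : escapingSet g ⊆ ϑ '' U) :
    ϑ '' escapingSet f = escapingSet g := by
  ext w
  constructor
  · rintro ⟨z, hz, rfl⟩
    exact (apply_mem_escapingSet_iff ϑ hconj fun n => hIf (iterate_mem_escapingSet hz n)).2 hz
  · intro hw
    have horbit : ∀ n, f^[n] (ϑ.symm w) ∈ U :=
      iterate_mem_of_iterate_apply_mem_image ϑ.injective hconj fun n => by
        simpa using hIg (iterate_mem_escapingSet hw n)
    refine ⟨ϑ.symm w, (apply_mem_escapingSet_iff ϑ hconj horbit).1 ?_, ϑ.apply_symm_apply w⟩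
    simpa using hw

theorem image_escapingSet_eq_of_conj
    (f g : ℂ → ℂ) (hf : TranscendentalEntire f) (hg : TranscendentalEntire g)
    (ϑ : ℂ ≃ₜ ℂ) (U : Set ℂ)
    (hconj : ∀ z ∈ U, ϑ (f z) = g (ϑ z))
    (hIf : escapingSet f ⊆ U) (hIg : escapingSet g ⊆ ϑ '' U) :
    ϑ '' escapingSet f = escapingSet g :=
  image_escapingSet_eq_of_conj_general f g ϑ U hconj hIf hIg
end

section
/- Let ψ : ℂ → ℂ be a homeomorphism of the plane and let V ⊆ ℂ be a domain (a nonempty open connected set). Then ψ(T(V)) = T(ψ(V)). -/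
/-- `T(V)`: the union of `V` with all bounded connected components of `ℂ \ V`
(the topological hull of `V`). -/
def hullT (V : Set ℂ) : Set ℂ :=
  V ∪ {z | z ∉ V ∧ Bornology.IsBounded (connectedComponentIn Vᶜ z)}

open Bornology Set

theorem Bornology.IsBounded.image_of_continuous {X Y : Type*} [PseudoMetricSpace X]
    [ProperSpace X] [PseudoMetricSpace Y] {f : X → Y} (hf : Continuous f) {s : Set X}
    (hs : IsBounded s) : IsBounded (f '' s) :=
  ((hs.isCompact_closure.image hf).isBounded).subset (image_mono subset_closure)

theorem Homeomorph.image_connectedComponentIn_compl {X Y : Type*} [TopologicalSpace X]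
    [TopologicalSpace Y] (ψ : X ≃ₜ Y) {V : Set X} {z : X} (hz : z ∉ V) :
    ψ '' connectedComponentIn Vᶜ z = connectedComponentIn (ψ '' V)ᶜ (ψ z) := by
  rw [ψ.image_connectedComponentIn hz, image_compl_eq ψ.bijective]

theorem image_hullT_subset (ψ : ℂ ≃ₜ ℂ) (V : Set ℂ) : ψ '' hullT V ⊆ hullT (ψ '' V) := by
  rintro _ ⟨z, hzV | ⟨hzV, hbdd⟩, rfl⟩
  · exact Or.inl (mem_image_of_mem ψ hzV)
  · refine Or.inr ⟨ψ.injective.mem_set_image.not.mpr hzV, ?_⟩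
    rw [← ψ.image_connectedComponentIn_compl hzV]
    exact hbdd.image_of_continuous ψ.continuous

theorem image_hullT_eq_hullT_image_general (ψ : ℂ ≃ₜ ℂ) (V : Set ℂ) :
    ψ '' hullT V = hullT (ψ '' V) := by
  refine (image_hullT_subset ψ V).antisymm ?_
  simpa [image_image, ψ.preimage_symm] using image_hullT_subset ψ.symm (ψ '' V)

theorem image_hullT_eq_hullT_image (ψ : ℂ ≃ₜ ℂ) (V : Set ℂ)
    (hV : IsOpen V) (hVc : IsConnected V) :
    ψ '' hullT V = hullT (ψ '' V) :=
  image_hullT_eq_hullT_image_general ψ V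
end

section
/- Let X be a metric space and x ∈ X, and set A := X ∖ {x}. Suppose that A, with its subspace topology, is totally separated, and that every point a ∈ A is separated from x in X. Then X is totally separated. -/
/-- Points `a` and `b` are *separated* in a topological space `X` if there is a clopen
subset of `X` containing `a` but not `b`. -/
def SeparatedPts {X : Type*} [TopologicalSpace X] (a b : X) : Prop :=
  ∃ U : Set X, IsClopen U ∧ a ∈ U ∧ b ∉ U

/-- A topological space is *totally separated* if any two distinct points are separated. -/
def IsTotSepSpace (X : Type*) [TopologicalSpace X] : Prop :=
  ∀ a b : X, a ≠ b → SeparatedPts a b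

theorem totallySeparated_of_complement_point {X : Type*} [MetricSpace X] (x : X)
    (hA : IsTotSepSpace (↥({x}ᶜ : Set X)))
    (hsep : ∀ a : X, a ∈ ({x}ᶜ : Set X) → SeparatedPts a x) :
    IsTotSepSpace X := by
  intro a b hab
  by_cases hax : a = x
  · subst hax
    have hbx : b ≠ a := hab.symm
    obtain ⟨U, hU, hbU, hxU⟩ := hsep b hbx
    exact ⟨Uᶜ, hU.compl, hxU, fun h => h hbU⟩
  by_cases hbx : b = x
  · subst hbx
    exact hsep a hax
  obtain ⟨U, hU, haU, hxU⟩ := hsep a hax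
  have haA : a ∈ ({x}ᶜ : Set X) := hax
  have hbA : b ∈ ({x}ᶜ : Set X) := hbx
  obtain ⟨V, hV, haV, hbV⟩ := hA ⟨a, haA⟩ ⟨b, hbA⟩ (by simpa using hab)
  obtain ⟨C, hC, hCeq⟩ := isClosed_induced_iff.mp hV.1
  obtain ⟨W, hW, hWeq⟩ := isOpen_induced_iff.mp hV.2
  have hUA : U ⊆ ({x}ᶜ : Set X) := fun y hy hyx => by
    simp only [Set.mem_singleton_iff] at hyx
    exact hxU (hyx ▸ hy)
  refine ⟨U ∩ W, ⟨?_, hU.2.inter hW⟩, ⟨haU, ?_⟩, ?_⟩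
  · have heq : U ∩ W = U ∩ C := by
      ext y
      constructor
      · rintro ⟨hyU, hyW⟩
        have hmem : (⟨y, hUA hyU⟩ : ↥({x}ᶜ : Set X)) ∈ V := by
          rw [← hWeq]; exact hyW
        rw [← hCeq] at hmem
        exact ⟨hyU, hmem⟩
      · rintro ⟨hyU, hyC⟩
        have hmem : (⟨y, hUA hyU⟩ : ↥({x}ᶜ : Set X)) ∈ V := by
          rw [← hCeq]; exact hyC
        rw [← hWeq] at hmem
        exact ⟨hyU, hmem⟩
    rw [heq]; exact hU.1.inter hC
  · have h := haV; rw [← hWeq] at h; exact h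
  · rintro ⟨hbU, hbW⟩
    apply hbV
    rw [← hWeq]
    exact hbW
end

section
/- Suppose that (E_n)_{n ≥ 0} is a sequence of nonempty compact subsets of ℂ and that f : ℂ → ℂ is a continuous function such that f(E_n) ⊇ E_{n+1} for all n ≥ 0. Then there exists ζ ∈ E_0 such that f^n(ζ) ∈ E_n for all n ≥ 0. -/
theorem exists_orbit_in_compact_sets (E : ℕ → Set ℂ)
    (hne : ∀ n, (E n).Nonempty) (hcpt : ∀ n, IsCompact (E n))
    (f : ℂ → ℂ) (hf : Continuous f)
    (hcover : ∀ n : ℕ, E (n + 1) ⊆ f '' E n) :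
    ∃ ζ ∈ E 0, ∀ n : ℕ, f^[n] ζ ∈ E n := by
  -- backward chain lemma
  have key : ∀ n : ℕ, ∀ w ∈ E n, ∃ z, f^[n] z = w ∧ ∀ k ≤ n, f^[k] z ∈ E k := by
    intro n
    induction n with
    | zero =>
      intro w hw
      exact ⟨w, rfl, fun k hk => by simpa [Nat.le_zero.mp hk] using hw⟩
    | succ n ih =>
      intro w hw
      obtain ⟨v, hv, hfv⟩ := hcover n hw
      obtain ⟨z, hz, hzk⟩ := ih v hv
      refine ⟨z, ?_, ?_⟩
      · rw [Function.iterate_succ_apply', hz, hfv]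
      · intro k hk
        rcases Nat.lt_succ_iff_lt_or_eq.mp (Nat.lt_succ_of_le hk) with h | h
        · exact hzk k (Nat.lt_succ_iff.mp h)
        · subst h
          rw [Function.iterate_succ_apply', hz, hfv]; exact hw
  set K : ℕ → Set ℂ := fun n => {z | ∀ k ≤ n, f^[k] z ∈ E k} with hK
  have hKclosed : ∀ n, IsClosed (K n) := by
    intro n
    have : K n = ⋂ k ∈ Finset.range (n+1), f^[k] ⁻¹' E k := by
      ext z
      simp [hK, Nat.lt_succ_iff]
    rw [this]
    exact isClosed_biInter fun k _ =>
      ((hcpt k).isClosed).preimage (hf.iterate k)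
  have hKne : ∀ n, (K n).Nonempty := by
    intro n
    obtain ⟨w, hw⟩ := hne n
    obtain ⟨z, _, hzk⟩ := key n w hw
    exact ⟨z, hzk⟩
  have hKsub : ∀ n, K (n+1) ⊆ K n := fun n z hz k hk => hz k (hk.trans n.le_succ)
  have hKcpt : IsCompact (K 0) := by
    have hsub : K 0 ⊆ E 0 := fun z hz => by simpa using hz 0 le_rfl
    exact (hcpt 0).of_isClosed_subset (hKclosed 0) hsub
  obtain ⟨z, hz⟩ := IsCompact.nonempty_iInter_of_sequence_nonempty_isCompact_isClosed
    K hKsub hKne hKcpt hKclosed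
  simp only [Set.mem_iInter] at hz
  exact ⟨z, by simpa using hz 0 0 le_rfl, fun n => hz n n le_rfl⟩
end
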